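/- arXiv:1306.4935 — 3 statements merged into one kernel-verified Lean document; each statement's English description precedes it below -/
import Mathlib

section
/- Let R be a commutative ring and α, β ∈ R. Define s_n = Σ_{i=0}^{n} α^i β^{n-i}. Then in R[[X]] one has (1 - α²X)(1 - β²X) · Σ_{k≥0} s_{2k} X^k = 1 + αβX. -/
/-!
Write `t_k = s_{2k}`. Peeling off the top terms of the geometric sum twice gives
`t_{k+1} = β² t_k + α(α + β)(α²)^k`, i.e. `(1 - β²X) T = 1 + α(α + β) X G` with `G = Σ (α²)^k X^k`.
Since `(1 - α²X) G = 1`, multiplying by `1 - α²X` leaves `1 - α²X + α(α + β)X = 1 + αβX`.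
-/

open PowerSeries

theorem PowerSeries.one_sub_C_mul_X_mul_mk {R : Type*} [Ring R] (c : R) (t : ℕ → R) :
    (1 - C c * X) * mk t = C (t 0) + X * mk fun k => t (k + 1) - c * t k := by
  ext (_ | n) <;> simp [sub_mul, mul_assoc, coeff_succ_X_mul]

theorem PowerSeries.one_sub_C_mul_X_mul_mk_pow {R : Type*} [Ring R] (c : R) :
    (1 - C c * X) * mk (c ^ ·) = 1 := by
  have mk_zero : (mk fun _ => (0 : R)) = 0 := rfl
  simp [one_sub_C_mul_X_mul_mk, pow_succ', mk_zero]

theorem PowerSeries.mk_const_mul {R : Type*} [Semiring R] (a : R) (g : ℕ → R) :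
    (mk fun k => a * g k) = C a * mk g := by
  ext n
  simp [coeff_C_mul]

theorem geom_sum₂_succ_succ {R : Type*} [CommRing R] (x y : R) (n : ℕ) :
    ∑ i ∈ Finset.range (n + 2), x ^ i * y ^ (n + 1 - i) =
      x ^ (n + 1) + y * ∑ i ∈ Finset.range (n + 1), x ^ i * y ^ (n - i) := by
  simpa using geom_sum₂_succ_eq x y (n := n + 1)

theorem stmt_1 (R : Type*) [CommRing R] (α β : R) (s : ℕ → R)
    (hs : ∀ n, s n = ∑ i ∈ Finset.range (n + 1), α ^ i * β ^ (n - i)) :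
    (1 - PowerSeries.C (α ^ 2) * PowerSeries.X) * (1 - PowerSeries.C (β ^ 2) * PowerSeries.X) *
      PowerSeries.mk (fun k => s (2 * k)) = 1 + PowerSeries.C (α * β) * PowerSeries.X := by
  have hs0 : s 0 = 1 := by simp [hs]
  have hrec : ∀ n, s (n + 1) = β * s n + α ^ (n + 1) := fun n => by
    rw [hs, hs, geom_sum₂_succ_succ]; ring
  have hstep : ∀ k, s (2 * (k + 1)) - β ^ 2 * s (2 * k) = (α ^ 2 + α * β) * (α ^ 2) ^ k :=
    fun k => by rw [show 2 * (k + 1) = 2 * k + 1 + 1 by ring, hrec, hrec]; ring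
  rw [mul_assoc, one_sub_C_mul_X_mul_mk]
  simp only [hs0, hstep, mk_const_mul, map_one, map_add]
  linear_combination (X * (C (α ^ 2) + C (α * β))) * one_sub_C_mul_X_mul_mk_pow (α ^ 2)
end

section
/- Let R be a commutative ring and α, β ∈ R. Define s_n = Σ_{i=0}^{n} α^i β^{n-i}. Then in R[[X]] one has (1 - α²X)(1 - αβX)(1 - β²X) · Σ_{k≥0} s_{2k} X^k = 1 - α²β²X². -/
/-!
Write `s_n = ∑_{i+j=n} α^i β^j`. From `s_{n+1} = α^{n+1} + β s_n` one gets the linear recurrence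
`s_{n+2} = (α+β) s_{n+1} - αβ s_n`, and eliminating the odd terms gives
`s_{n+4} = (α²+β²) s_{n+2} - α²β² s_n`. Hence `(1 - α²X)(1 - β²X) = 1 - (α²+β²)X + α²β²X²` kills all
coefficients of `∑ s_{2k} X^k` beyond degree one, leaving `1 + αβX`; multiplying by `1 - αβX`
gives `1 - α²β²X²`.
-/

open Finset PowerSeries

section LinearRecurrence

variable {R : Type*} [CommRing R]

theorem add_four_eq_of_add_two_eq {u : ℕ → R} {p q : R}
    (hu : ∀ n, u (n + 2) = p * u (n + 1) - q * u n) (n : ℕ) :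
    u (n + 4) = (p ^ 2 - 2 * q) * u (n + 2) - q ^ 2 * u n := by
  linear_combination hu (n + 2) + p * hu (n + 1) + q * hu n

theorem PowerSeries.mul_mk_eq_of_add_two_eq {u : ℕ → R} {a b : R}
    (hu : ∀ n, u (n + 2) = a * u (n + 1) - b * u n) :
    (1 - C a * X + C b * X ^ 2) * mk u = C (u 0) + C (u 1 - a * u 0) * X := by
  rw [show (1 - C a * X + C b * X ^ 2) * mk u = mk u - C a * (X * mk u) + C b * (X ^ 2 * mk u) by
    ring]
  ext (_ | _ | n)
  · simp
  · simp [coeff_succ_X_mul, coeff_X_pow_mul']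
  · simp [coeff_succ_X_mul, coeff_X_pow_mul', hu n]

end LinearRecurrence

section CompleteHomogeneous

variable {R : Type*} [CommRing R] (α β : R)

def completeHomogeneous₂ (n : ℕ) : R :=
  ∑ i ∈ range (n + 1), α ^ i * β ^ (n - i)

theorem completeHomogeneous₂_succ (n : ℕ) :
    completeHomogeneous₂ α β (n + 1) = α ^ (n + 1) + β * completeHomogeneous₂ α β n := by
  simpa [completeHomogeneous₂] using geom_sum₂_succ_eq α β (n := n + 1)

theorem completeHomogeneous₂_add_two (n : ℕ) :
    completeHomogeneous₂ α β (n + 2) =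
      (α + β) * completeHomogeneous₂ α β (n + 1) - α * β * completeHomogeneous₂ α β n := by
  linear_combination completeHomogeneous₂_succ α β (n + 1) - α * completeHomogeneous₂_succ α β n

theorem completeHomogeneous₂_two_mul_add_two (k : ℕ) :
    completeHomogeneous₂ α β (2 * (k + 2)) =
      (α ^ 2 + β ^ 2) * completeHomogeneous₂ α β (2 * (k + 1)) -
        α ^ 2 * β ^ 2 * completeHomogeneous₂ α β (2 * k) := by
  convert add_four_eq_of_add_two_eq (completeHomogeneous₂_add_two α β) (2 * k) using 1 <;> ring_nf

theorem mul_mk_completeHomogeneous₂_two_mul :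
    (1 - C (α ^ 2 + β ^ 2) * X + C (α ^ 2 * β ^ 2) * X ^ 2 : R⟦X⟧) *
        PowerSeries.mk (fun k => completeHomogeneous₂ α β (2 * k)) = 1 + C (α * β) * X := by
  rw [PowerSeries.mul_mk_eq_of_add_two_eq (completeHomogeneous₂_two_mul_add_two α β)]
  simp [completeHomogeneous₂, sum_range_succ]
  ring

end CompleteHomogeneous

theorem stmt_2 (R : Type*) [CommRing R] (α β : R) (s : ℕ → R)
    (hs : ∀ n, s n = ∑ i ∈ Finset.range (n + 1), α ^ i * β ^ (n - i)) :
    (1 - PowerSeries.C (R := R) (α ^ 2) * PowerSeries.X) * (1 - PowerSeries.C (R := R) (α * β) * PowerSeries.X) *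
      (1 - PowerSeries.C (R := R) (β ^ 2) * PowerSeries.X) * PowerSeries.mk (fun k => s (2 * k)) =
      1 - PowerSeries.C (R := R) (α ^ 2 * β ^ 2) * PowerSeries.X ^ 2 := by
  obtain rfl : s = completeHomogeneous₂ α β := funext hs
  have hfactor : (1 - C (α ^ 2) * X) * (1 - C (α * β) * X) * (1 - C (β ^ 2) * X) =
      (1 - C (α * β) * X) * (1 - C (α ^ 2 + β ^ 2) * X + C (α ^ 2 * β ^ 2) * X ^ 2 : R⟦X⟧) := by
    simp only [map_add, map_mul]; ring
  rw [hfactor, mul_assoc, mul_mk_completeHomogeneous₂_two_mul]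
  simp only [map_mul, map_pow]
  ring
end

section
/- Let A be a commutative ring that is finitely generated as a ℤ_p-module (hence complete in its p-adic topology), and let x ∈ A. Then the sequence (x^{n!})_{n≥1} converges in the p-adic topology of A, and its limit e = lim_n x^{n!} is an idempotent: e² = e. -/
/-!
Modulo `p ^ m` the ring `A` is finite, so the powers of `x` there are eventually periodic. Once `n!`
exceeds the preperiod and is divisible by the period, `x ^ n!` is idempotent modulo `p ^ m`, and
it stays constant from then on because `n! ∣ n'!` for `n ≤ n'`. Thus `(x ^ n!)` is `p`-adically
Cauchy.
As a finite module over the complete Noetherian local ring `ℤ_[p]`, `A` is `p`-adically complete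
and separated, so the sequence has a limit, which is idempotent modulo every `p ^ m` and hence
idempotent.
-/

open Filter

section Monoid

variable {M : Type*} [Monoid M]

theorem pow_add_mul_eq_of_pow_add_eq {y : M} {i s a : ℕ} (h : y ^ (i + s) = y ^ i) (ha : i ≤ a)
    (t : ℕ) : y ^ (a + t * s) = y ^ a := by
  obtain ⟨c, rfl⟩ := Nat.exists_eq_add_of_le ha
  induction t with
  | zero => simp
  | succ t ih =>
    calc y ^ (i + c + (t + 1) * s) = y ^ (i + s) * y ^ (c + t * s) := by
          rw [← pow_add]; ring_nf
      _ = y ^ (i + c + t * s) := by rw [h, ← pow_add, add_assoc]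
      _ = y ^ (i + c) := ih

theorem eventually_isIdempotentElem_pow_factorial [Finite M] (y : M) :
    ∀ᶠ n : ℕ in atTop, IsIdempotentElem (y ^ n.factorial) := by
  obtain ⟨i, j, hij, hy⟩ : ∃ i j, i < j ∧ y ^ (i + (j - i)) = y ^ i := by
    obtain ⟨i, j, hne, heq⟩ := Finite.exists_ne_map_eq_of_infinite (y ^ · : ℕ → M)
    rcases hne.lt_or_gt with h | h
    · exact ⟨i, j, h, by rw [Nat.add_sub_cancel' h.le, heq]⟩
    · exact ⟨j, i, h, by rw [Nat.add_sub_cancel' h.le, heq]⟩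
  filter_upwards [eventually_ge_atTop (max i (j - i))] with n hn
  obtain ⟨t, ht⟩ := Nat.dvd_factorial (Nat.sub_pos_of_lt hij) (le_of_max_le_right hn)
  have hi : i ≤ n.factorial := (le_of_max_le_left hn).trans n.self_le_factorial
  rw [IsIdempotentElem, ← pow_add]
  nth_rewrite 2 [ht]
  rw [mul_comm, pow_add_mul_eq_of_pow_add_eq hy hi]

theorem IsIdempotentElem.pow_factorial_eq_of_le {y : M} {n n' : ℕ}
    (h : IsIdempotentElem (y ^ n.factorial)) (hn : n ≤ n') :
    y ^ n'.factorial = y ^ n.factorial := by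
  obtain ⟨k, hk⟩ := Nat.factorial_dvd_factorial hn
  have hk0 : k ≠ 0 := by rintro rfl; exact n'.factorial_ne_zero (by simpa using hk)
  rw [hk, pow_mul, h.pow_eq hk0]

end Monoid

theorem IsPrecomplete.of_finite {R M : Type*} [CommRing R] [AddCommGroup M] [Module R M]
    (I : Ideal R) [IsPrecomplete I R] [Module.Finite R M] : IsPrecomplete I M := by
  rw [← AdicCompletion.of_surjective_iff]
  intro y
  obtain ⟨t, rfl⟩ := AdicCompletion.ofTensorProduct_surjective_of_finite I M y
  induction t using TensorProduct.induction_on with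
  | zero => exact ⟨0, by simp⟩
  | tmul r x =>
    obtain ⟨s, rfl⟩ := AdicCompletion.of_surjective I R r
    refine ⟨s • x, ?_⟩
    rw [AdicCompletion.ofTensorProduct_tmul, LinearMap.map_smul]
    exact (algebraMap_smul (AdicCompletion I R) s _).symm
  | add t u ht hu =>
    obtain ⟨a, ha⟩ := ht
    obtain ⟨b, hb⟩ := hu
    exact ⟨a + b, by simp [ha, hb]⟩

theorem finite_quotient_map_algebraMap {R S : Type*} [CommRing R] [CommRing S] [Algebra R S]
    [Module.Finite R S] (𝔞 : Ideal R) [Finite (R ⧸ 𝔞)] :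
    Finite (S ⧸ 𝔞.map (algebraMap R S)) := by
  have : Finite (S ⧸ 𝔞 • (⊤ : Submodule R S)) := Module.finite_of_finite (R ⧸ 𝔞)
  rw [Ideal.smul_top_eq_map] at this
  exact .of_equiv _ (Submodule.Quotient.restrictScalarsEquiv R _).toEquiv

theorem exists_isIdempotentElem_pow_factorial_sub_mem {A : Type*} [CommRing A] (I : Ideal A)
    [IsAdicComplete I A] (hfin : ∀ m, Finite (A ⧸ I ^ m)) (x : A) :
    ∃ e, (∀ m, ∀ᶠ n : ℕ in atTop, x ^ n.factorial - e ∈ I ^ m) ∧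
      IsIdempotentElem e := by
  have smodEq_iff {m : ℕ} {a b : A} :
      a ≡ b [SMOD (I ^ m • ⊤ : Submodule A A)] ↔ a - b ∈ I ^ m := by
    simp [SModEq.sub_mem]
  have eventually_idem (m : ℕ) :
      ∀ᶠ n : ℕ in atTop, IsIdempotentElem (Ideal.Quotient.mk (I ^ m) (x ^ n.factorial)) := by
    have := hfin m
    simpa only [map_pow] using
      eventually_isIdempotentElem_pow_factorial (Ideal.Quotient.mk (I ^ m) x)
  have stable {m n n' : ℕ} (h : IsIdempotentElem (Ideal.Quotient.mk (I ^ m) (x ^ n.factorial)))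
      (hn : n ≤ n') : x ^ n'.factorial - x ^ n.factorial ∈ I ^ m := by
    rw [map_pow] at h
    rw [← Ideal.Quotient.eq, map_pow, map_pow, h.pow_factorial_eq_of_le hn]
  obtain ⟨ψ, hψ, hidem⟩ := extraction_forall_of_eventually eventually_idem
  obtain ⟨e, he⟩ := IsPrecomplete.prec inferInstance (f := fun m ↦ x ^ (ψ m).factorial)
    fun hmk ↦ smodEq_iff.2 <| by
      simpa using (I ^ _).neg_mem_iff.2 (stable (hidem _) (hψ.monotone hmk))
  refine ⟨e, fun m ↦ ?_, ?_⟩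
  · filter_upwards [eventually_ge_atTop (ψ m)] with n hn
    simpa using (I ^ m).add_mem (stable (hidem m) hn) (smodEq_iff.1 (he m))
  · refine sub_eq_zero.1 (IsHausdorff.haus inferInstance _ fun m ↦ smodEq_iff.2 ?_)
    have hmk : Ideal.Quotient.mk (I ^ m) e = Ideal.Quotient.mk (I ^ m) (x ^ (ψ m).factorial) :=
      (Ideal.Quotient.eq.2 (smodEq_iff.1 (he m))).symm
    rw [sub_zero, ← Ideal.Quotient.eq, map_mul, hmk]
    exact hidem m

namespace PadicInt

open IsLocalRing

variable {p : ℕ} [Fact p.Prime] {A : Type*} [CommRing A] [Algebra ℤ_[p] A]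

theorem map_maximalIdeal_eq_span_p :
    (maximalIdeal ℤ_[p]).map (algebraMap ℤ_[p] A) = Ideal.span {(p : A)} := by
  rw [maximalIdeal_eq_span_p, Ideal.map_span, Set.image_singleton, map_natCast]

variable [Module.Finite ℤ_[p] A]

theorem isAdicComplete_span_p : IsAdicComplete (Ideal.span {(p : A)}) A := by
  rw [← map_maximalIdeal_eq_span_p, IsAdicComplete.map_algebraMap_iff]
  exact { toIsPrecomplete := .of_finite _ }

theorem finite_quotient_span_p_pow (m : ℕ) : Finite (A ⧸ Ideal.span {(p : A)} ^ m) := by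
  have : Finite (ℤ_[p] ⧸ maximalIdeal ℤ_[p]) := .of_equiv _ residueField.symm.toEquiv
  have := Ideal.finite_quotient_pow (IsNoetherian.noetherian (maximalIdeal ℤ_[p])) m
  rw [← map_maximalIdeal_eq_span_p, ← Ideal.map_pow]
  exact finite_quotient_map_algebraMap _

end PadicInt

theorem stmt_11 (p : ℕ) [Fact p.Prime] (A : Type*) [CommRing A] [Algebra ℤ_[p] A]
    (hA : Module.Finite ℤ_[p] A) (x : A) :
    ∃ e : A,
      (∀ m : ℕ, ∃ N : ℕ, ∀ n ≥ N, x ^ n.factorial - e ∈ Ideal.span {(p : A) ^ m}) ∧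
      e * e = e := by
  have := PadicInt.isAdicComplete_span_p (p := p) (A := A)
  obtain ⟨e, hlim, hidem⟩ :=
    exists_isIdempotentElem_pow_factorial_sub_mem _
      (PadicInt.finite_quotient_span_p_pow (p := p)) x
  refine ⟨e, fun m ↦ ?_, hidem⟩
  simpa only [Ideal.span_singleton_pow] using eventually_atTop.1 (hlim m)
end
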